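/- Let T be a bounded operator on ℓ_2 and let u ∈ ℓ_2 be a norming vector for T. Then T*Tu = ‖T‖² u, where T* is the Hilbert-space adjoint of T. In particular, if the set 𝒩(T) of norming vectors for T is nonempty, then 𝒩(T) ∪ {0} is a linear subspace of ℓ_2 (i.e. u + v ∈ 𝒩(T) ∪ {0} and λu ∈ 𝒩(T) ∪ {0} for all u, v ∈ 𝒩(T) and all λ ∈ ℂ). -/

import Mathlib

open scoped ENNReal

noncomputable section

/-- The Hilbert space `ℓ₂` of square-summable complex sequences. -/
abbrev L2 := lp (fun _ : ℕ => ℂ) 2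

/-- The set `𝒩(T)` of norming vectors for a bounded operator `T` on `ℓ₂`:
nonzero vectors `x` with `‖Tx‖ = ‖T‖·‖x‖`. -/
def NormingSet (T : L2 →L[ℂ] L2) : Set L2 :=
  {x | x ≠ 0 ∧ ‖T x‖ = ‖T‖ * ‖x‖}

/-!
If `‖Tu‖ = ‖T‖‖u‖`, then `y = T*Tu` satisfies `‖y‖ ≤ ‖T‖²‖u‖` and `Re⟪y, u⟫ = ‖Tu‖² = ‖T‖²‖u‖²`,
so equality holds in Cauchy–Schwarz, which forces `y = ‖T‖²u`: expanding `‖y - ‖T‖²u‖²` gives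
a nonpositive number. Conversely `T*Tu = ‖T‖²u` gives `‖Tu‖² = ⟪T*Tu, u⟫ = ‖T‖²‖u‖²`. Hence the
norming vectors together with `0` form the eigenspace of `T*T` for the eigenvalue `‖T‖²`.
-/

open ContinuousLinearMap Module.End

section

variable {𝕜 E : Type*} [RCLike 𝕜] [NormedAddCommGroup E] [InnerProductSpace 𝕜 E]

theorem eq_smul_of_norm_le_of_re_inner_eq {x y : E} {c : ℝ} (hy : ‖y‖ ≤ c * ‖x‖)
    (hyx : RCLike.re (inner 𝕜 y x) = c * ‖x‖ ^ 2) : y = (c : 𝕜) • x := by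
  have hy_sq : ‖y‖ ^ 2 ≤ (c * ‖x‖) ^ 2 := pow_le_pow_left₀ (norm_nonneg y) hy 2
  have hsub : ‖y - (c : 𝕜) • x‖ ^ 2 ≤ 0 := by
    rw [norm_sub_sq (𝕜 := 𝕜), inner_smul_real_right, RCLike.smul_re, hyx, norm_smul, RCLike.norm_ofReal]
    nlinarith [sq_abs c]
  exact sub_eq_zero.mp <| norm_eq_zero.mp <|
    pow_eq_zero_iff two_ne_zero |>.mp (le_antisymm hsub (sq_nonneg _))

variable {F : Type*} [NormedAddCommGroup F] [InnerProductSpace 𝕜 F] [CompleteSpace E]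
  [CompleteSpace F]

theorem norm_apply_eq_opNorm_mul_iff (T : E →L[𝕜] F) (x : E) :
    ‖T x‖ = ‖T‖ * ‖x‖ ↔ (adjoint T ∘L T) x = ((‖T‖ ^ 2 : ℝ) : 𝕜) • x := by
  have hre : RCLike.re (inner 𝕜 ((adjoint T ∘L T) x) x) = ‖T x‖ ^ 2 :=
    (T.apply_norm_sq_eq_inner_adjoint_left x).symm
  constructor
  · intro hx
    refine eq_smul_of_norm_le_of_re_inner_eq ?_ (by rw [hre, hx]; ring)
    calc ‖(adjoint T ∘L T) x‖ ≤ ‖adjoint T ∘L T‖ * ‖x‖ := le_opNorm _ _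
      _ = ‖T‖ ^ 2 * ‖x‖ := by rw [norm_adjoint_comp_self, sq]
  · intro hx
    rw [hx, inner_smul_real_left, RCLike.smul_re, inner_self_eq_norm_sq] at hre
    rw [← pow_left_inj₀ (norm_nonneg _) (by positivity) two_ne_zero, ← hre]
    ring

theorem mem_eigenspace_adjoint_comp_self_iff (T : E →L[𝕜] F) (x : E) :
    x ∈ eigenspace ((adjoint T ∘L T : E →L[𝕜] E) : E →ₗ[𝕜] E) ((‖T‖ ^ 2 : ℝ) : 𝕜) ↔
      ‖T x‖ = ‖T‖ * ‖x‖ := by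
  rw [mem_eigenspace_iff, norm_apply_eq_opNorm_mul_iff]
  rfl

end

theorem normingSet_union_zero_eq_eigenspace (T : L2 →L[ℂ] L2) :
    NormingSet T ∪ {0} =
      eigenspace ((adjoint T ∘L T : L2 →L[ℂ] L2) : L2 →ₗ[ℂ] L2) ((‖T‖ ^ 2 : ℝ) : ℂ) := by
  ext x
  refine Iff.trans ?_ (mem_eigenspace_adjoint_comp_self_iff T x).symm
  by_cases hx : x = 0
  · simp [hx]
  · simp [NormingSet, hx]

/-- Let `T` be a bounded operator on `ℓ₂` and let `u ∈ ℓ₂` be a norming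
vector for `T`.  Then `T*Tu = ‖T‖² u`.  In particular, if `𝒩(T) ≠ ∅` then
`𝒩(T) ∪ {0}` is a linear subspace of `ℓ₂`: it is closed under addition and under
scalar multiplication. -/
theorem adjoint_comp_apply_of_norming (T : L2 →L[ℂ] L2) (u : L2) (hu : u ∈ NormingSet T) :
    (ContinuousLinearMap.adjoint T) (T u) = ((‖T‖ ^ 2 : ℝ) : ℂ) • u ∧
    (∀ v w : L2, v ∈ NormingSet T → w ∈ NormingSet T → v + w ∈ NormingSet T ∪ {0}) ∧
    (∀ v : L2, v ∈ NormingSet T → ∀ c : ℂ, c • v ∈ NormingSet T ∪ {0}) := by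
  have mem_eigenspace {v : L2} (hv : v ∈ NormingSet T) :
      v ∈ eigenspace ((adjoint T ∘L T : L2 →L[ℂ] L2) : L2 →ₗ[ℂ] L2) ((‖T‖ ^ 2 : ℝ) : ℂ) :=
    (mem_eigenspace_adjoint_comp_self_iff T v).mpr hv.2
  refine ⟨mem_eigenspace_iff.mp (mem_eigenspace hu), ?_, ?_⟩
  · intro v w hv hw
    rw [normingSet_union_zero_eq_eigenspace]
    exact add_mem (mem_eigenspace hv) (mem_eigenspace hw)
  · intro v hv c
    rw [normingSet_union_zero_eq_eigenspace]
    exact Submodule.smul_mem _ c (mem_eigenspace hv)
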